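/- For ε > 0 define f_ε : ℂ → ℂ by f_ε(0) := 0 and f_ε(z) := z|z|^{2εi} = z e^{iε log(z·z̄)} for z ≠ 0. Then f_ε is a bijection of ℂ with inverse f_ε^{−1}(w) = w|w|^{−2εi}, and there is an absolute constant C such that for every 0 < ε ≤ 1 both f_ε and f_ε^{−1} are Lipschitz with constant at most 1 + Cε; in particular, f_ε is a globally biLipschitz homeomorphism of ℂ ≅ ℝ². -/

import Mathlib

/-!
Since `f_ε` rotates each circle `|z| = r` rigidly, `|f_ε z - f_ε w| = |z - w e^{iθ}|` with
`θ = 2ε (log |w| - log |z|)`. For `|w| ≤ |z|` this is at most `|z - w| + |w| |θ|`, and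
`|w| log (|z| / |w|) ≤ |z| - |w| ≤ |z - w|` turns that into `(1 + 2|ε|) |z - w|`.
The inverse is `f_{-ε}`, to which the same estimate applies.
-/

noncomputable section

/-- The logarithmic spiral map `f_ε(z) = z |z|^{2εi} = z e^{2εi log|z|}` (with
`f_ε(0) = 0`, which this formula yields since `Real.log 0 = 0`). -/
def spiral (ε : ℝ) (z : ℂ) : ℂ :=
  z * Complex.exp (((2 * ε * Real.log ‖z‖ : ℝ) : ℂ) * Complex.I)

open Complex Function

theorem mul_abs_log_sub_log_le {s t : ℝ} (hs : 0 ≤ s) (hst : s ≤ t) :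
    s * |Real.log s - Real.log t| ≤ t - s := by
  rcases hs.eq_or_lt with rfl | hs
  · simpa using hst
  have ht : 0 < t := hs.trans_le hst
  have hlog : Real.log s ≤ Real.log t := Real.log_le_log hs hst
  calc s * |Real.log s - Real.log t| = s * Real.log (t / s) := by
        rw [abs_of_nonpos (by linarith), Real.log_div ht.ne' hs.ne']; ring
    _ ≤ s * (t / s - 1) := by gcongr; exact Real.log_le_sub_one_of_pos (div_pos ht hs)
    _ = t - s := by field_simp

theorem norm_sub_mul_exp_le (z w : ℂ) (θ : ℝ) :
    ‖z - w * exp (I * θ)‖ ≤ ‖z - w‖ + ‖w‖ * |θ| :=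
  calc ‖z - w * exp (I * θ)‖ = ‖(z - w) - w * (exp (I * θ) - 1)‖ := by ring_nf
    _ ≤ ‖z - w‖ + ‖w‖ * ‖exp (I * θ) - 1‖ := by rw [← norm_mul]; exact norm_sub_le _ _
    _ ≤ ‖z - w‖ + ‖w‖ * |θ| := by gcongr; exact Real.norm_exp_I_mul_ofReal_sub_one_le

theorem norm_spiral (ε : ℝ) (z : ℂ) : ‖spiral ε z‖ = ‖z‖ := by
  simp only [spiral, norm_mul, norm_exp_ofReal_mul_I, mul_one]

theorem spiral_neg_spiral (ε : ℝ) (z : ℂ) : spiral (-ε) (spiral ε z) = z := by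
  rw [spiral, norm_spiral, spiral, mul_assoc, ← exp_add]
  push_cast
  ring_nf
  rw [exp_zero, mul_one]

theorem leftInverse_spiral_neg (ε : ℝ) : LeftInverse (spiral (-ε)) (spiral ε) :=
  spiral_neg_spiral ε

theorem rightInverse_spiral_neg (ε : ℝ) : RightInverse (spiral (-ε)) (spiral ε) := fun w => by
  simpa only [neg_neg] using spiral_neg_spiral (-ε) w

theorem dist_spiral_eq (ε : ℝ) (z w : ℂ) :
    dist (spiral ε z) (spiral ε w) =
      ‖z - w * exp (I * ((2 * ε * (Real.log ‖w‖ - Real.log ‖z‖) : ℝ) : ℂ))‖ := by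
  have hfactor : spiral ε z - spiral ε w =
      (z - w * exp (I * ((2 * ε * (Real.log ‖w‖ - Real.log ‖z‖) : ℝ) : ℂ))) *
        exp (((2 * ε * Real.log ‖z‖ : ℝ) : ℂ) * I) := by
    rw [spiral, spiral, sub_mul, mul_assoc w, ← exp_add]
    push_cast
    ring_nf
  rw [dist_eq, hfactor, norm_mul, norm_exp_ofReal_mul_I, mul_one]

theorem dist_spiral_le (ε : ℝ) (z w : ℂ) :
    dist (spiral ε z) (spiral ε w) ≤ (1 + 2 * |ε|) * dist z w := by
  wlog h : ‖w‖ ≤ ‖z‖ generalizing z w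
  · simpa only [dist_comm] using this w z (le_of_not_ge h)
  calc dist (spiral ε z) (spiral ε w)
      ≤ ‖z - w‖ + ‖w‖ * |2 * ε * (Real.log ‖w‖ - Real.log ‖z‖)| := by
        rw [dist_spiral_eq]; exact norm_sub_mul_exp_le z w _
    _ = ‖z - w‖ + 2 * |ε| * (‖w‖ * |Real.log ‖w‖ - Real.log ‖z‖|) := by
        rw [abs_mul, abs_mul, abs_two]; ring
    _ ≤ ‖z - w‖ + 2 * |ε| * ‖z - w‖ := by
        gcongr
        exact (mul_abs_log_sub_log_le (norm_nonneg w) h).trans (norm_sub_norm_le z w)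
    _ = (1 + 2 * |ε|) * dist z w := by rw [dist_eq]; ring

theorem lipschitzWith_spiral (ε : ℝ) :
    LipschitzWith (Real.toNNReal (1 + 2 * |ε|)) (spiral ε) :=
  LipschitzWith.of_dist_le_mul fun z w => by
    rw [Real.coe_toNNReal _ (by positivity)]
    exact dist_spiral_le ε z w

/-- The logarithmic spiral `f_ε(z) = z|z|^{2εi}` is a bijection of `ℂ`
with inverse `f_ε^{-1}(w) = w|w|^{−2εi} = f_{−ε}(w)`, and there is an absolute constant
`C` such that for all `0 < ε ≤ 1` both `f_ε` and `f_ε^{-1}` are Lipschitz with constant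
at most `1 + Cε`; in particular `f_ε` is a globally biLipschitz homeomorphism of
`ℂ ≅ ℝ²`. -/
theorem statement16 :
    ∃ C : ℝ, 0 < C ∧
      ∀ ε : ℝ, 0 < ε → ε ≤ 1 →
        Function.Bijective (spiral ε) ∧
        Function.LeftInverse (spiral (-ε)) (spiral ε) ∧
        Function.RightInverse (spiral (-ε)) (spiral ε) ∧
        LipschitzWith (Real.toNNReal (1 + C * ε)) (spiral ε) ∧
        LipschitzWith (Real.toNNReal (1 + C * ε)) (spiral (-ε)) := by
  refine ⟨2, two_pos, fun ε hε _ => ?_⟩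
  have hlip := lipschitzWith_spiral ε
  have hlip_neg := lipschitzWith_spiral (-ε)
  rw [abs_of_pos hε] at hlip
  rw [abs_neg, abs_of_pos hε] at hlip_neg
  exact ⟨⟨(leftInverse_spiral_neg ε).injective, (rightInverse_spiral_neg ε).surjective⟩,
    leftInverse_spiral_neg ε, rightInverse_spiral_neg ε, hlip, hlip_neg⟩
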